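/- arXiv:1409.4071 — 4 statements merged into one kernel-verified Lean document; each statement's English description precedes it below -/
import Mathlib

section
/- Fix an integer m ≥ 1 and an even integer n ≥ 2. In ℤ^m, let Λ^♯ = (n/2)ℤ^m, let Q_n ⊆ Λ^♯ be the subgroup generated by the vectors (n/2)(e_i − e_{i+1}) for 1 ≤ i < m together with n·e_m, and let E = {a ∈ ℤ^m : Σ_i a_i ∈ 2ℤ}. Then the homomorphism Λ^♯ → ℤ^m given by μ ↦ (2/n)·μ carries Q_n onto E and induces a group isomorphism Λ^♯/Q_n ≅ ℤ^m/E; in particular Λ^♯/Q_n is cyclic of order 2, generated by the class of (n/2)e_m. -/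
/-! Multiplication by `k` identifies `ℤ^m` with `kℤ^m`, and it carries `E` onto `Q`: the
generators of `Q` are `k` times `eᵢ - eᵢ₊₁` and `2eₘ`, which lie in `E`, and conversely these
generate `E`, since the `eᵢ - eⱼ` telescope and `a = ∑ aᵢ (eᵢ - e₀) + (∑ aᵢ) e₀`. Hence
`Λ^♯/Q ≅ ℤ^m/E`, which has order two because the parity of the coordinate sum flips when `e₀`
is subtracted. -/

/-- The sublattice `kℤ^m ⊆ ℤ^m`. -/
def kLattice (m : ℕ) (k : ℤ) : AddSubgroup (Fin m → ℤ) where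
  carrier := {μ | ∀ i, k ∣ μ i}
  zero_mem' := by intro i; simp
  add_mem' := by intro a b ha hb i; simpa using dvd_add (ha i) (hb i)
  neg_mem' := by intro a ha i; simpa using ha i

/-- The subgroup `E = {a ∈ ℤ^m : Σᵢ aᵢ even}`. -/
def evenSumLattice (m : ℕ) : AddSubgroup (Fin m → ℤ) where
  carrier := {a | (2 : ℤ) ∣ ∑ i, a i}
  zero_mem' := by simp
  add_mem' := by
    intro a b ha hb
    simpa [Finset.sum_add_distrib] using dvd_add ha hb
  neg_mem' := by
    intro a ha
    simpa [Finset.sum_neg_distrib] using ha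

/-- The subgroup `Q_n` of `ℤ^m` generated by `k(e_i − e_{i+1})` for `1 ≤ i < m` together with
`2k·e_m` (for `n = 2k` these are `(n/2)(e_i − e_{i+1})` and `n·e_m`). -/
def qLattice (m : ℕ) (k : ℤ) : AddSubgroup (Fin m → ℤ) :=
  AddSubgroup.closure
    ({v | ∃ i j : Fin m, (i : ℕ) + 1 = (j : ℕ) ∧
        v = k • (Pi.single i (1 : ℤ) - Pi.single j 1)} ∪
     {v | ∃ i : Fin m, (i : ℕ) + 1 = m ∧ v = (2 * k) • Pi.single i (1 : ℤ)})

section Decomposition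

variable {ι R : Type*} [Fintype ι] [DecidableEq ι] [Ring R]

lemma eq_sum_smul_single_sub_single_add (a : ι → R) (j : ι) :
    a = ∑ i, a i • (Pi.single i 1 - Pi.single j 1) + (∑ i, a i) • Pi.single j 1 := by
  simp only [smul_sub, Finset.sum_sub_distrib, ← Finset.sum_smul, sub_add_cancel]
  conv_lhs => rw [← Finset.univ_sum_single a]
  simp [← Pi.single_smul']

end Decomposition

section Lattices

variable {m : ℕ}

lemma mem_evenSumLattice_iff {a : Fin m → ℤ} : a ∈ evenSumLattice m ↔ 2 ∣ ∑ i, a i := Iff.rfl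

lemma mem_evenSumLattice_or_sub_single_mem (a : Fin m → ℤ) (j : Fin m) :
    a ∈ evenSumLattice m ∨ a - Pi.single j 1 ∈ evenSumLattice m := by
  simp only [mem_evenSumLattice_iff, Pi.sub_apply, Finset.sum_sub_distrib, Finset.sum_pi_single',
    Finset.mem_univ, if_true]
  omega

lemma single_notMem_evenSumLattice (j : Fin m) : Pi.single j 1 ∉ evenSumLattice m := by
  simp [mem_evenSumLattice_iff, Finset.sum_pi_single']

lemma evenSumLattice_index (hm : 0 < m) : (evenSumLattice m).index = 2 :=
  AddSubgroup.index_eq_two_iff_exists_notMem_and.2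
    ⟨-Pi.single ⟨0, hm⟩ 1, neg_mem_iff.not.2 (single_notMem_evenSumLattice _), fun b => by
      rw [← sub_eq_add_neg]; exact (mem_evenSumLattice_or_sub_single_mem b _).symm⟩

lemma smul_mem_kLattice (k : ℤ) (a : Fin m → ℤ) : k • a ∈ kLattice m k :=
  fun i => dvd_mul_right k (a i)

lemma exists_smul_eq_of_mem_kLattice {k : ℤ} {μ : Fin m → ℤ} (hμ : μ ∈ kLattice m k) :
    ∃ a, k • a = μ := by
  choose a ha using hμ
  exact ⟨a, funext fun i => (ha i).symm⟩

noncomputable def smulEquivKLattice {k : ℤ} (hk : k ≠ 0) : (Fin m → ℤ) ≃+ kLattice m k :=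
  AddEquiv.ofBijective ((zsmulAddGroupHom k).codRestrict _ (smul_mem_kLattice k))
    ⟨fun _ _ h => smul_right_injective _ hk (congrArg Subtype.val h), fun μ =>
      (exists_smul_eq_of_mem_kLattice μ.2).imp fun _ h => Subtype.ext h⟩

lemma coe_smulEquivKLattice {k : ℤ} (hk : k ≠ 0) (a : Fin m → ℤ) :
    (smulEquivKLattice hk a : Fin m → ℤ) = k • a := rfl

lemma smul_single_sub_single_succ_mem_qLattice (k : ℤ) {i : ℕ} (hi : i + 1 < m) :
    k • (Pi.single ⟨i, by omega⟩ (1 : ℤ) - Pi.single ⟨i + 1, hi⟩ 1) ∈ qLattice m k :=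
  AddSubgroup.subset_closure (Or.inl ⟨_, _, rfl, rfl⟩)

lemma two_mul_smul_single_last_mem_qLattice (k : ℤ) (hm : 0 < m) :
    (2 * k) • Pi.single ⟨m - 1, by omega⟩ (1 : ℤ) ∈ qLattice m k :=
  AddSubgroup.subset_closure (Or.inr ⟨_, by simp; omega, rfl⟩)

lemma smul_single_zero_sub_single_mem_qLattice (k : ℤ) (hm : 0 < m) :
    ∀ (i : ℕ) (hi : i < m), k • (Pi.single ⟨0, hm⟩ (1 : ℤ) - Pi.single ⟨i, hi⟩ 1) ∈ qLattice m k
  | 0, _ => by simp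
  | i + 1, hi => by
    have := add_mem (smul_single_zero_sub_single_mem_qLattice k hm i (by omega))
      (smul_single_sub_single_succ_mem_qLattice k hi)
    rwa [← smul_add, sub_add_sub_cancel] at this

lemma smul_single_sub_single_mem_qLattice (k : ℤ) (i j : Fin m) :
    k • (Pi.single i (1 : ℤ) - Pi.single j 1) ∈ qLattice m k := by
  have := sub_mem (smul_single_zero_sub_single_mem_qLattice k i.pos j j.2)
    (smul_single_zero_sub_single_mem_qLattice k i.pos i i.2)
  rwa [← smul_sub, sub_sub_sub_cancel_left] at this

lemma two_mul_smul_single_mem_qLattice (k : ℤ) (i : Fin m) :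
    (2 * k) • Pi.single i (1 : ℤ) ∈ qLattice m k := by
  have hm := i.pos
  have := add_mem
    (zsmul_mem (smul_single_sub_single_mem_qLattice k i ⟨m - 1, by omega⟩) 2)
    (two_mul_smul_single_last_mem_qLattice k hm)
  convert this using 1
  module

lemma smul_mem_qLattice_of_mem_evenSumLattice (k : ℤ) (hm : 0 < m) {a : Fin m → ℤ}
    (ha : a ∈ evenSumLattice m) : k • a ∈ qLattice m k := by
  obtain ⟨t, ht⟩ := ha
  rw [eq_sum_smul_single_sub_single_add a ⟨0, hm⟩, ht, smul_add, Finset.smul_sum]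
  refine add_mem (sum_mem fun i _ => ?_) ?_
  · rw [smul_comm]
    exact zsmul_mem (smul_single_sub_single_mem_qLattice k i _) _
  · convert zsmul_mem (two_mul_smul_single_mem_qLattice k ⟨0, hm⟩) t using 1
    module

lemma qLattice_eq_map_evenSumLattice (k : ℤ) (hm : 0 < m) :
    qLattice m k = (evenSumLattice m).map (zsmulAddGroupHom k) := by
  refine le_antisymm (AddSubgroup.closure_le _ |>.2 ?_) ?_
  · rintro v (⟨i, j, -, rfl⟩ | ⟨i, -, rfl⟩)
    · exact ⟨_, by simp [mem_evenSumLattice_iff, Finset.sum_sub_distrib], rfl⟩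
    · refine ⟨(2 : ℤ) • Pi.single i 1, Finset.dvd_sum fun _ _ => dvd_mul_right _ _, ?_⟩
      simp only [zsmulAddGroupHom_apply]
      module
  · rintro _ ⟨a, ha, rfl⟩
    exact smul_mem_qLattice_of_mem_evenSumLattice k hm ha

lemma qLattice_le_kLattice (k : ℤ) (hm : 0 < m) : qLattice m k ≤ kLattice m k := by
  rw [qLattice_eq_map_evenSumLattice k hm]
  exact AddSubgroup.map_le_iff_le_comap.2 fun a _ => smul_mem_kLattice k a

lemma smul_mem_qLattice_iff (hm : 0 < m) {k : ℤ} (hk : k ≠ 0) (a : Fin m → ℤ) :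
    k • a ∈ qLattice m k ↔ a ∈ evenSumLattice m := by
  rw [qLattice_eq_map_evenSumLattice k hm]
  exact AddSubgroup.mem_map_iff_mem (smul_right_injective _ hk)

lemma map_smulEquivKLattice_evenSumLattice (hm : 0 < m) {k : ℤ} (hk : k ≠ 0) :
    (evenSumLattice m).map (smulEquivKLattice (m := m) hk).toAddMonoidHom =
      (qLattice m k).addSubgroupOf (kLattice m k) := by
  ext μ
  obtain ⟨a, rfl⟩ := (smulEquivKLattice hk).surjective μ
  rw [AddSubgroup.mem_map_equiv, AddEquiv.symm_apply_apply, AddSubgroup.mem_addSubgroupOf,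
    coe_smulEquivKLattice, smul_mem_qLattice_iff hm hk]

noncomputable def kLatticeQuotientEquiv (hm : 0 < m) {k : ℤ} (hk : k ≠ 0) :
    (kLattice m k ⧸ (qLattice m k).addSubgroupOf (kLattice m k)) ≃+
      ((Fin m → ℤ) ⧸ evenSumLattice m) :=
  (QuotientAddGroup.congr _ _ (smulEquivKLattice hk)
    (map_smulEquivKLattice_evenSumLattice hm hk)).symm

lemma kLatticeQuotientEquiv_mk (hm : 0 < m) {k : ℤ} (hk : k ≠ 0) (a : Fin m → ℤ) :
    kLatticeQuotientEquiv hm hk (smulEquivKLattice hk a) = QuotientAddGroup.mk a :=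
  (AddEquiv.symm_apply_eq _).2 rfl

end Lattices

theorem sharp_mod_roots_Sp (m k : ℕ) (hm : 1 ≤ m) (hk : 1 ≤ k) :
    qLattice m (k : ℤ) ≤ kLattice m (k : ℤ) ∧
    (∀ a : Fin m → ℤ, (k : ℤ) • a ∈ qLattice m (k : ℤ) ↔ a ∈ evenSumLattice m) ∧
    (∃ e : (↥(kLattice m (k : ℤ)) ⧸
          (qLattice m (k : ℤ)).addSubgroupOf (kLattice m (k : ℤ)))
        ≃+ ((Fin m → ℤ) ⧸ evenSumLattice m),
      ∀ (μ : kLattice m (k : ℤ)) (a : Fin m → ℤ), (k : ℤ) • a = (μ : Fin m → ℤ) →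
        e (QuotientAddGroup.mk μ) = QuotientAddGroup.mk a) ∧
    Nat.card (↥(kLattice m (k : ℤ)) ⧸
      (qLattice m (k : ℤ)).addSubgroupOf (kLattice m (k : ℤ))) = 2 ∧
    (∀ μ ∈ kLattice m (k : ℤ), μ ∈ qLattice m (k : ℤ) ∨
      μ - (k : ℤ) • Pi.single (⟨m - 1, by omega⟩ : Fin m) 1 ∈ qLattice m (k : ℤ)) := by
  have hk0 : (k : ℤ) ≠ 0 := by omega
  refine ⟨qLattice_le_kLattice k hm, smul_mem_qLattice_iff hm hk0,
    ⟨kLatticeQuotientEquiv hm hk0, fun μ a h => ?_⟩, ?_, fun μ hμ => ?_⟩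
  · obtain rfl : μ = smulEquivKLattice hk0 a := Subtype.ext h.symm
    exact kLatticeQuotientEquiv_mk hm hk0 a
  · rw [Nat.card_congr (kLatticeQuotientEquiv hm hk0).toEquiv]
    exact evenSumLattice_index hm
  · obtain ⟨a, rfl⟩ := exists_smul_eq_of_mem_kLattice hμ
    rw [← smul_sub, smul_mem_qLattice_iff hm hk0, smul_mem_qLattice_iff hm hk0]
    exact mem_evenSumLattice_or_sub_single_mem a _
end

section
/- Fix integers m ≥ 2 and n ≥ 1. Let Λ = {a ∈ ℤ^m : Σ_i a_i ∈ 2ℤ}, equip ℤ^m with the bilinear form ι(x,y) = Σ_{i=1}^m x_i y_i, and set Λ^♯ = {μ ∈ Λ : ι(μ,ν) ∈ nℤ for all ν ∈ Λ}. Then: (i) if n is odd, Λ^♯ = nΛ; (ii) if n is even and nm/2 is even, Λ^♯ = nℤ^m + ℤ·(n/2, n/2, …, n/2); (iii) if n is even and nm/2 is odd, Λ^♯ = nℤ^m. (When n is even, nℤ^m ⊆ Λ, so the right-hand sides are subgroups of Λ.) -/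
lemma cond_iff_pairs (m n : ℕ) (hm : 2 ≤ m) (μ : Fin m → ℤ) :
    (∀ ν : Fin m → ℤ, ((2 : ℤ) ∣ ∑ i, ν i) → (n : ℤ) ∣ ∑ i, μ i * ν i) ↔
    (∀ i j : Fin m, (n : ℤ) ∣ μ i + μ j) := by
  constructor
  · intro h i j
    have h1 : (∑ x, (((Pi.single i 1 + Pi.single j 1 : Fin m → ℤ)) x)) = 2 := by
      simp [Finset.sum_add_distrib, Finset.sum_pi_single']
    have h2 : (∑ x, μ x * (((Pi.single i 1 + Pi.single j 1 : Fin m → ℤ)) x)) = μ i + μ j := by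
      simp [Pi.add_apply, mul_add, Finset.sum_add_distrib, Pi.single_apply, mul_ite,
        Finset.sum_ite_eq']
    have := h (Pi.single i 1 + Pi.single j 1) (by rw [h1])
    rwa [h2] at this
  · intro h ν hν
    obtain ⟨s, hs⟩ := hν
    set i0 : Fin m := ⟨0, by omega⟩
    have key : ∑ i, μ i * ν i = (∑ i, (μ i + μ i0) * ν i) - (μ i0 + μ i0) * s := by
      rw [Finset.sum_congr rfl (fun i _ => add_mul (μ i) (μ i0) (ν i)),
        Finset.sum_add_distrib, ← Finset.mul_sum, hs]
      ring
    rw [key]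
    exact dvd_sub (Finset.dvd_sum fun i _ => (h i i0).mul_right _) ((h i0 i0).mul_right _)

/-- For the coweight lattice `Λ = {a ∈ ℤ^m : Σ aᵢ even}` of `Spin_{2m+1}` with the minimal
Weyl-invariant form `ι(x,y) = Σ xᵢyᵢ`, the lattice `Λ^♯ = {μ ∈ Λ : ι(μ,ν) ∈ nℤ ∀ν ∈ Λ}`
equals: `nΛ` if `n` is odd; `nℤ^m + ℤ·(n/2,…,n/2)` if `n` is even and `nm/2` is even;
`nℤ^m` if `n` is even and `nm/2` is odd. -/
theorem sharp_lattice_Spin (m n : ℕ) (hm : 2 ≤ m) (hn : 1 ≤ n) (μ : Fin m → ℤ)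
    (hμ : (2 : ℤ) ∣ ∑ i, μ i) :
    (Odd n →
      ((∀ ν : Fin m → ℤ, ((2 : ℤ) ∣ ∑ i, ν i) → (n : ℤ) ∣ ∑ i, μ i * ν i) ↔
        ∃ a : Fin m → ℤ, ((2 : ℤ) ∣ ∑ i, a i) ∧ μ = (n : ℤ) • a)) ∧
    (∀ k : ℕ, n = 2 * k →
      (Even (k * m) →
        ((∀ ν : Fin m → ℤ, ((2 : ℤ) ∣ ∑ i, ν i) → (n : ℤ) ∣ ∑ i, μ i * ν i) ↔
          ∃ (a : Fin m → ℤ) (c : ℤ), μ = (n : ℤ) • a + c • (fun _ => (k : ℤ)))) ∧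
      (Odd (k * m) →
        ((∀ ν : Fin m → ℤ, ((2 : ℤ) ∣ ∑ i, ν i) → (n : ℤ) ∣ ∑ i, μ i * ν i) ↔
          ∀ i, (n : ℤ) ∣ μ i))) := by
  constructor
  · -- n odd
    intro hodd
    obtain ⟨t, ht⟩ := hodd
    have hcop : IsCoprime (2 : ℤ) (n : ℤ) := ⟨-t, 1, by push_cast [ht]; ring⟩
    rw [cond_iff_pairs m n hm μ]
    constructor
    · intro hD
      have hdvd : ∀ i, (n : ℤ) ∣ μ i := by
        intro i
        have h2 : (n : ℤ) ∣ 2 * μ i := by have := hD i i; rwa [← two_mul] at this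
        exact hcop.symm.dvd_of_dvd_mul_left h2
      refine ⟨fun i => μ i / n, ?_, funext fun i => ?_⟩
      · have hsum : ∑ i, μ i = (n : ℤ) * ∑ i, μ i / n := by
          rw [Finset.mul_sum]
          exact Finset.sum_congr rfl fun i _ => (Int.mul_ediv_cancel' (hdvd i)).symm
        rw [hsum] at hμ
        exact hcop.dvd_of_dvd_mul_left hμ
      · simp only [Pi.smul_apply, smul_eq_mul]
        exact (Int.mul_ediv_cancel' (hdvd i)).symm
    · rintro ⟨a, ha, rfl⟩ i j
      simp only [Pi.smul_apply, smul_eq_mul]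
      exact ⟨a i + a j, by ring⟩
  · intro k hk
    have hn2 : (n : ℤ) = 2 * (k : ℤ) := by push_cast [hk]; ring
    constructor
    · -- k*m even
      intro _
      rw [cond_iff_pairs m n hm μ]
      constructor
      · intro hD
        set i0 : Fin m := ⟨0, by omega⟩
        obtain ⟨t0, ht0⟩ := hD i0 i0
        have hμ0 : μ i0 = (k : ℤ) * t0 := by
          have h2 : μ i0 + μ i0 = 2 * ((k : ℤ) * t0) := by rw [ht0, hn2]; ring
          omega
        refine ⟨fun i => (hD i i0).choose - t0, t0, funext fun i => ?_⟩
        have hti := (hD i i0).choose_spec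
        simp only [Pi.add_apply, Pi.smul_apply, smul_eq_mul]
        linear_combination hti - hμ0 + t0 * hn2
      · rintro ⟨a, c, rfl⟩ i j
        simp only [Pi.add_apply, Pi.smul_apply, smul_eq_mul]
        refine ⟨a i + a j + c, ?_⟩
        linear_combination (-c) * hn2
    · -- k*m odd
      intro hkm
      rw [Nat.odd_mul] at hkm
      obtain ⟨hkodd, hmodd⟩ := hkm
      rw [cond_iff_pairs m n hm μ]
      constructor
      · intro hD
        set i0 : Fin m := ⟨0, by omega⟩
        obtain ⟨t0, ht0⟩ := hD i0 i0
        have hμ0 : μ i0 = (k : ℤ) * t0 := by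
          have h2 : μ i0 + μ i0 = 2 * ((k : ℤ) * t0) := by rw [ht0, hn2]; ring
          omega
        -- show 2 ∣ μ i0 hence 2 ∣ t0 hence n ∣ μ i0
        have hsum : ∑ i, μ i = (n : ℤ) * (∑ i, (hD i i0).choose) - (m : ℤ) * μ i0 := by
          have heq : ∀ i : Fin m, μ i = (n : ℤ) * (hD i i0).choose - μ i0 := by
            intro i
            have := (hD i i0).choose_spec
            linarith
          rw [Finset.sum_congr rfl fun i _ => heq i, Finset.sum_sub_distrib,
            Finset.sum_const, Finset.card_univ, Fintype.card_fin, nsmul_eq_mul,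
            Finset.mul_sum]
        have h2m : (2 : ℤ) ∣ (m : ℤ) * μ i0 := by
          have h1 : (m : ℤ) * μ i0 = (n : ℤ) * (∑ i, (hD i i0).choose) - ∑ i, μ i := by
            linarith
          rw [h1]
          exact dvd_sub ⟨(k : ℤ) * (∑ i, (hD i i0).choose), by linear_combination (∑ i, (hD i i0).choose) * hn2⟩ hμ
        have h2μ0 : (2 : ℤ) ∣ μ i0 := by
          rcases Int.prime_two.dvd_mul.mp h2m with h | h
          · exfalso
            obtain ⟨m', hm'⟩ := hmodd
            omega
          · exact h
        have h2t0 : (2 : ℤ) ∣ t0 := by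
          rw [hμ0] at h2μ0
          rcases Int.prime_two.dvd_mul.mp h2μ0 with h | h
          · exfalso
            obtain ⟨k', hk'⟩ := hkodd
            omega
          · exact h
        have hnμ0 : (n : ℤ) ∣ μ i0 := by
          obtain ⟨t0', ht0'⟩ := h2t0
          exact ⟨t0', by rw [hμ0, ht0', hn2]; ring⟩
        intro i
        have hti := (hD i i0).choose_spec
        obtain ⟨u, hu⟩ := hnμ0
        exact ⟨(hD i i0).choose - u, by linarith [hti, hu]⟩
      · intro h i j
        exact dvd_add (h i) (h j)
end

section
/- Fix an integer m ≥ 2 and an even integer n ≥ 2. Let Λ = {a ∈ ℤ^m : Σ_i a_i ∈ 2ℤ} and Λ^♯ = {μ ∈ Λ : Σ_i μ_i ν_i ∈ nℤ for all ν ∈ Λ}. Let P = ℤ^m + ℤ·(1/2, …, 1/2) ⊂ ℚ^m, so that P/ℤ^m ≅ ℤ/2ℤ. Consider the homomorphism f : Λ^♯ → P/ℤ^m, μ ↦ (1/n)μ mod ℤ^m. If nm/2 is even, then f is surjective with kernel nℤ^m, and hence induces an isomorphism Λ^♯/nℤ^m ≅ P/ℤ^m ≅ ℤ/2ℤ. If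 nm/2 is odd, then Λ^♯ = nℤ^m and f is identically zero; in particular f is not surjective, even though P/ℤ^m ≅ ℤ/2ℤ is nonzero and killed by n. -/
/-- `Λ^♯ = {μ ∈ Λ : Σ μᵢνᵢ ∈ nℤ for all ν ∈ Λ}` where `Λ = {a ∈ ℤ^m : Σ aᵢ even}`. -/
def spinSharp (m n : ℕ) : AddSubgroup (Fin m → ℤ) where
  carrier := {μ | ((2 : ℤ) ∣ ∑ i, μ i) ∧
    ∀ ν : Fin m → ℤ, ((2 : ℤ) ∣ ∑ i, ν i) → (n : ℤ) ∣ ∑ i, μ i * ν i}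
  zero_mem' := by
    refine ⟨by simp, ?_⟩
    intro ν hν
    simp
  add_mem' := by
    intro a b ha hb
    refine ⟨by simpa [Finset.sum_add_distrib] using dvd_add ha.1 hb.1, ?_⟩
    intro ν hν
    simpa [add_mul, Finset.sum_add_distrib] using dvd_add (ha.2 ν hν) (hb.2 ν hν)
  neg_mem' := by
    intro a ha
    refine ⟨by simpa [Finset.sum_neg_distrib] using ha.1, ?_⟩
    intro ν hν
    simpa [neg_mul, Finset.sum_neg_distrib] using ha.2 ν hν

/-- The lattice `ℤ^m` viewed inside `ℚ^m`. -/
def intPoints (m : ℕ) : AddSubgroup (Fin m → ℚ) where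
  carrier := {v | ∀ i, ∃ z : ℤ, v i = (z : ℚ)}
  zero_mem' := by intro i; exact ⟨0, by simp⟩
  add_mem' := by
    intro a b ha hb i
    obtain ⟨x, hx⟩ := ha i
    obtain ⟨y, hy⟩ := hb i
    exact ⟨x + y, by simp [hx, hy]⟩
  neg_mem' := by
    intro a ha i
    obtain ⟨x, hx⟩ := ha i
    exact ⟨-x, by simp [hx]⟩

/-- `P = ℤ^m + ℤ·(1/2, …, 1/2) ⊂ ℚ^m`. -/
def halfLattice (m : ℕ) : AddSubgroup (Fin m → ℚ) :=
  intPoints m ⊔ AddSubgroup.zmultiples (fun _ => (1 / 2 : ℚ))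

/-! Pairing `μ ∈ Λ^♯` with the vectors `2eᵢ` and `eᵢ - eⱼ` of `Λ` shows that `μ` is congruent
modulo `n = 2k` either to `0` or to `k(1, …, 1)`, and the second case occurs exactly when `km` is
even, because `Σ μᵢ` must be even. On the other side `P/ℤ^m = {0, [½(1, …, 1)]}`, and the
nonzero class is `f (k(1, …, 1))`. -/
open QuotientAddGroup

lemma Int.dvd_or_dvd_sub_of_two_mul_dvd_two_mul {k a : ℤ} (h : 2 * k ∣ 2 * a) :
    2 * k ∣ a ∨ 2 * k ∣ a - k := by
  obtain ⟨c, hc⟩ := h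
  have hac : a = k * c := by linarith
  rcases Int.even_or_odd' c with ⟨d, rfl | rfl⟩
  · exact Or.inl ⟨d, by rw [hac]; ring⟩
  · exact Or.inr ⟨d, by rw [hac]; ring⟩

section spinSharp

variable {m n k : ℕ} {μ : Fin m → ℤ}

lemma dvd_two_mul_of_mem_spinSharp (hμ : μ ∈ spinSharp m n) (i : Fin m) :
    (n : ℤ) ∣ 2 * μ i := by
  simpa [mul_ite, mul_comm] using hμ.2 (fun l => if l = i then 2 else 0) (by simp)

lemma dvd_sub_of_mem_spinSharp (hμ : μ ∈ spinSharp m n) (i j : Fin m) :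
    (n : ℤ) ∣ μ i - μ j := by
  simpa [mul_sub, mul_ite, Finset.sum_sub_distrib] using
    hμ.2 (fun l => (if l = i then 1 else 0) - if l = j then 1 else 0)
      (by simp [Finset.sum_sub_distrib])

lemma dvd_or_dvd_sub_of_mem_spinSharp (hn : n = 2 * k) (hμ : μ ∈ spinSharp m n) :
    (∀ i, (n : ℤ) ∣ μ i) ∨ (∀ i, (n : ℤ) ∣ μ i - k) := by
  rcases isEmpty_or_nonempty (Fin m) with _ | ⟨⟨i₀⟩⟩
  · exact Or.inl isEmptyElim
  have hnk : (n : ℤ) = 2 * k := by exact_mod_cast hn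
  have h₀ := dvd_two_mul_of_mem_spinSharp hμ i₀
  rw [hnk] at h₀ ⊢
  rcases Int.dvd_or_dvd_sub_of_two_mul_dvd_two_mul h₀ with h | h
  · refine Or.inl fun i => ?_
    have := dvd_add (hnk ▸ dvd_sub_of_mem_spinSharp hμ i i₀) h
    rwa [sub_add_cancel] at this
  · refine Or.inr fun i => ?_
    have := dvd_add (hnk ▸ dvd_sub_of_mem_spinSharp hμ i i₀) h
    rwa [sub_add_sub_cancel] at this

theorem mem_spinSharp_iff (hn : n = 2 * k) :
    μ ∈ spinSharp m n ↔ (∀ i, (n : ℤ) ∣ μ i) ∨ (Even (k * m) ∧ ∀ i, (n : ℤ) ∣ μ i - k) := by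
  have h2n : (2 : ℤ) ∣ n := ⟨k, by rw [hn]; push_cast; ring⟩
  have hsum : ∀ c : ℤ, (∀ i, (n : ℤ) ∣ μ i - c) → ((2 : ℤ) ∣ ∑ i, μ i ↔ (2 : ℤ) ∣ m * c) :=
    fun c h => by
      rw [show ∑ i, μ i = ∑ i, (μ i - c) + m * c by simp [Finset.sum_sub_distrib],
        dvd_add_right (Finset.dvd_sum fun i _ => h2n.trans (h i))]
  constructor
  · intro hμ
    refine (dvd_or_dvd_sub_of_mem_spinSharp hn hμ).imp_right fun h => ⟨?_, h⟩
    rw [even_iff_two_dvd, ← Int.natCast_dvd_natCast, mul_comm]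
    exact_mod_cast (hsum k h).1 hμ.1
  rintro (h | ⟨hkm, h⟩)
  · exact ⟨h2n.trans (Finset.dvd_sum fun i _ => h i),
      fun ν _ => Finset.dvd_sum fun i _ => (h i).mul_right _⟩
  refine ⟨(hsum k h).2 ?_, fun ν ⟨t, ht⟩ => ?_⟩
  · rw [← even_iff_two_dvd, mul_comm]; exact_mod_cast hkm
  have hpair : ∑ i, μ i * ν i = ∑ i, (μ i - k) * ν i + n * t := by
    simp only [sub_mul, Finset.sum_sub_distrib, ← Finset.mul_sum, ht, hn]
    push_cast; ring
  rw [hpair]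
  exact dvd_add (Finset.dvd_sum fun i _ => (h i).mul_right _) (dvd_mul_right _ _)

lemma mem_spinSharp_iff_of_odd (hn : n = 2 * k) (hkm : Odd (k * m)) :
    μ ∈ spinSharp m n ↔ ∀ i, (n : ℤ) ∣ μ i := by
  simp [mem_spinSharp_iff hn, Nat.not_even_iff_odd.2 hkm]

lemma const_mem_spinSharp (hn : n = 2 * k) (hkm : Even (k * m)) :
    (fun _ => (k : ℤ)) ∈ spinSharp m n :=
  (mem_spinSharp_iff hn).2 (Or.inr ⟨hkm, fun _ => by simp⟩)

end spinSharp

lemma intPoints_le_halfLattice {m : ℕ} : intPoints m ≤ halfLattice m := le_sup_left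

lemma const_half_mem_halfLattice {m : ℕ} : (fun _ => (1 / 2 : ℚ)) ∈ halfLattice m :=
  le_sup_right (a := intPoints m) (AddSubgroup.mem_zmultiples _)

abbrev cocenter (m : ℕ) : Type :=
  ↥(halfLattice m) ⧸ (intPoints m).addSubgroupOf (halfLattice m)

namespace cocenter

variable {m : ℕ}

lemma mk_eq_zero_iff (v : halfLattice m) :
    (mk v : cocenter m) = 0 ↔ (v : Fin m → ℚ) ∈ intPoints m := by
  rw [QuotientAddGroup.eq_zero_iff, AddSubgroup.mem_addSubgroupOf]

variable (m) in
noncomputable def half : cocenter m := mk ⟨fun _ => 1 / 2, const_half_mem_halfLattice⟩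

lemma half_ne_zero (hm : m ≠ 0) : half m ≠ 0 := by
  rw [half, Ne, mk_eq_zero_iff]
  intro h
  obtain ⟨z, hz⟩ := h ⟨0, Nat.pos_of_ne_zero hm⟩
  have : (1 : ℤ) = 2 * z := by exact_mod_cast (by linarith : (1 : ℚ) = 2 * z)
  omega

lemma two_nsmul_half : 2 • half m = 0 := by
  rw [half, ← QuotientAddGroup.mk_nsmul, mk_eq_zero_iff]
  exact fun _ => ⟨1, by norm_num⟩

lemma exists_eq_zsmul_half (y : cocenter m) : ∃ t : ℤ, y = t • half m := by
  induction y using QuotientAddGroup.induction_on with | H v =>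
  obtain ⟨w, hw, _, ⟨t, rfl⟩, hv⟩ := AddSubgroup.mem_sup.1 v.2
  refine ⟨t, ?_⟩
  rw [half, ← QuotientAddGroup.mk_zsmul, eq_comm, QuotientAddGroup.eq,
    AddSubgroup.mem_addSubgroupOf]
  convert hw using 1
  push_cast
  rw [← hv]
  abel

lemma eq_zero_or_eq_half (y : cocenter m) : y = 0 ∨ y = half m := by
  obtain ⟨t, rfl⟩ := exists_eq_zsmul_half y
  obtain ⟨s, rfl | rfl⟩ := Int.even_or_odd' t
  · left
    rw [mul_zsmul', two_zsmul, ← two_nsmul, two_nsmul_half, zsmul_zero]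
  · right
    rw [add_zsmul, mul_zsmul', two_zsmul, ← two_nsmul, two_nsmul_half, zsmul_zero, zero_add,
      one_zsmul]

lemma two_nsmul_eq_zero (y : cocenter m) : 2 • y = 0 := by
  rcases eq_zero_or_eq_half y with rfl | rfl
  exacts [nsmul_zero 2, two_nsmul_half]

lemma natCard_eq_two (hm : m ≠ 0) : Nat.card (cocenter m) = 2 := by
  rw [Nat.card_eq_two_iff]
  exact ⟨0, half m, (half_ne_zero hm).symm,
    Set.eq_univ_of_forall fun y => eq_zero_or_eq_half y⟩

end cocenter

lemma div_mem_intPoints_iff {m n : ℕ} (hn : n ≠ 0) (a : Fin m → ℤ) :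
    (fun i => (a i : ℚ) / n) ∈ intPoints m ↔ ∀ i, (n : ℤ) ∣ a i := by
  have hn' : (n : ℚ) ≠ 0 := Nat.cast_ne_zero.2 hn
  refine forall_congr' fun i => ⟨fun ⟨z, hz⟩ => ⟨z, ?_⟩, fun ⟨z, hz⟩ => ⟨z, ?_⟩⟩
  · rw [div_eq_iff hn'] at hz
    exact_mod_cast hz.trans (mul_comm _ _)
  · dsimp only
    rw [hz]
    push_cast
    field_simp

section cocenterMap

variable {m n k : ℕ}

lemma div_mem_halfLattice (hk : 0 < k) (hn : n = 2 * k) {μ : Fin m → ℤ}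
    (hμ : μ ∈ spinSharp m n) : (fun i => (μ i : ℚ) / n) ∈ halfLattice m := by
  have hn0 : n ≠ 0 := by omega
  rcases dvd_or_dvd_sub_of_mem_spinSharp hn hμ with h | h
  · exact intPoints_le_halfLattice ((div_mem_intPoints_iff hn0 μ).2 h)
  have hsplit : (fun i => (μ i : ℚ) / n) =
      (fun i => ((μ i - k : ℤ) : ℚ) / n) + fun _ => 1 / 2 := by
    funext i
    rw [Pi.add_apply, hn]
    push_cast
    field_simp
    ring
  rw [hsplit]
  exact add_mem (intPoints_le_halfLattice ((div_mem_intPoints_iff hn0 _).2 h))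
    const_half_mem_halfLattice

noncomputable def cocenterMap (hk : 0 < k) (hn : n = 2 * k) : spinSharp m n →+ cocenter m where
  toFun μ := mk ⟨fun i => (μ.1 i : ℚ) / n, div_mem_halfLattice hk hn μ.2⟩
  map_zero' := by
    rw [← QuotientAddGroup.mk_zero]
    congr
    funext i
    simp
  map_add' μ ν := by
    rw [← QuotientAddGroup.mk_add]
    congr
    funext i
    simp [add_div]

variable (hk : 0 < k) (hn : n = 2 * k)

lemma cocenterMap_eq_mk (μ : spinSharp m n) (v : halfLattice m)
    (hv : ∀ i, (n : ℚ) * (v : Fin m → ℚ) i = ((μ : Fin m → ℤ) i : ℚ)) :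
    cocenterMap hk hn μ = mk v := by
  have hn' : (n : ℚ) ≠ 0 := by rw [hn]; positivity
  refine congrArg mk (Subtype.ext (funext fun i => ?_))
  dsimp only
  rw [← hv i, mul_div_cancel_left₀ _ hn']

lemma cocenterMap_eq_zero_iff (μ : spinSharp m n) :
    cocenterMap hk hn μ = 0 ↔ ∀ i, (n : ℤ) ∣ (μ : Fin m → ℤ) i :=
  (cocenter.mk_eq_zero_iff _).trans (div_mem_intPoints_iff (by omega) _)

lemma cocenterMap_surjective (hkm : Even (k * m)) :
    Function.Surjective (cocenterMap (m := m) hk hn) := by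
  have hhalf : cocenterMap hk hn ⟨_, const_mem_spinSharp hn hkm⟩ = cocenter.half m :=
    cocenterMap_eq_mk hk hn _ _ fun _ => by
      simp only [hn]
      push_cast
      ring
  intro y
  rcases cocenter.eq_zero_or_eq_half y with rfl | rfl
  exacts [⟨0, map_zero _⟩, ⟨_, hhalf⟩]

lemma cocenterMap_eq_zero_of_odd (hkm : Odd (k * m)) (μ : spinSharp m n) :
    cocenterMap hk hn μ = 0 :=
  (cocenterMap_eq_zero_iff hk hn μ).2 ((mem_spinSharp_iff_of_odd hn hkm).1 μ.2)

lemma not_surjective_cocenterMap (hm : m ≠ 0) (hkm : Odd (k * m)) :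
    ¬ Function.Surjective (cocenterMap (m := m) hk hn) := fun hsurj => by
  obtain ⟨μ, hμ⟩ := hsurj (cocenter.half m)
  exact cocenter.half_ne_zero hm (hμ ▸ cocenterMap_eq_zero_of_odd hk hn hkm μ)

end cocenterMap

/-- For `G = Spin_{2m+1}` and `n = 2k` even: the homomorphism `f : Λ^♯ → P/ℤ^m`,
`μ ↦ (1/n)μ mod ℤ^m`, is surjective with kernel `nℤ^m` (inducing `Λ^♯/nℤ^m ≅ P/ℤ^m ≅ ℤ/2`)
when `nm/2` is even, while when `nm/2` is odd one has `Λ^♯ = nℤ^m` and `f ≡ 0`, so `f` is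
not surjective even though `P/ℤ^m ≅ ℤ/2` is nonzero and killed by `n`. -/
theorem spin_sharp_cocenter_map (m n k : ℕ) (hm : 2 ≤ m) (hk : 1 ≤ k) (hn : n = 2 * k) :
    ∃ f : ↥(spinSharp m n) →+
        (↥(halfLattice m) ⧸ (intPoints m).addSubgroupOf (halfLattice m)),
      (∀ μ : spinSharp m n, ∃ v : halfLattice m,
        ∀ i, (n : ℚ) * (v : Fin m → ℚ) i = ((μ : Fin m → ℤ) i : ℚ)) ∧
      (∀ (μ : spinSharp m n) (v : halfLattice m),
        (∀ i, (n : ℚ) * (v : Fin m → ℚ) i = ((μ : Fin m → ℤ) i : ℚ)) →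
          f μ = QuotientAddGroup.mk v) ∧
      (Even (k * m) →
        Function.Surjective f ∧
        (∀ μ : spinSharp m n, f μ = 0 ↔ ∀ i, (n : ℤ) ∣ (μ : Fin m → ℤ) i) ∧
        ∃ e : (↥(spinSharp m n) ⧸ f.ker) ≃+
            (↥(halfLattice m) ⧸ (intPoints m).addSubgroupOf (halfLattice m)),
          ∀ μ : spinSharp m n, e (QuotientAddGroup.mk μ) = f μ) ∧
      (Odd (k * m) →
        (∀ μ : Fin m → ℤ, μ ∈ spinSharp m n ↔ ∀ i, (n : ℤ) ∣ μ i) ∧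
        (∀ μ : spinSharp m n, f μ = 0) ∧
        ¬ Function.Surjective f) ∧
      Nat.card (↥(halfLattice m) ⧸ (intPoints m).addSubgroupOf (halfLattice m)) = 2 ∧
      (∀ y : ↥(halfLattice m) ⧸ (intPoints m).addSubgroupOf (halfLattice m),
        n • y = 0) := by
  have hm0 : m ≠ 0 := by omega
  have hn0 : (n : ℚ) ≠ 0 := by rw [hn]; positivity
  refine ⟨cocenterMap hk hn, fun μ => ⟨⟨_, div_mem_halfLattice hk hn μ.2⟩,
      fun i => mul_div_cancel₀ _ hn0⟩, cocenterMap_eq_mk hk hn, fun hkm => ?_,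
    fun hkm => ?_, cocenter.natCard_eq_two hm0, fun y => ?_⟩
  · have hsurj := cocenterMap_surjective hk hn hkm
    exact ⟨hsurj, cocenterMap_eq_zero_iff hk hn,
      QuotientAddGroup.quotientKerEquivOfSurjective _ hsurj, fun _ => rfl⟩
  · exact ⟨fun _ => mem_spinSharp_iff_of_odd hn hkm, cocenterMap_eq_zero_of_odd hk hn hkm,
      not_surjective_cocenterMap hk hn hm0 hkm⟩
  · rw [hn, mul_nsmul, cocenter.two_nsmul_eq_zero, nsmul_zero]
end

section
/- With V, Φ, Φ⁺, Δ, the root lattice Q, the weight lattice P, dominant weights and the dominance order as in the context: if λ₁, λ₂ ∈ P are dominant weights with λ₁ − λ₂ ∈ Q, then there exists a dominant weight μ ∈ P with μ ≤ λ₁ and μ ≤ λ₂, i.e. both λ₁ − μ and λ₂ − μ are ℤ≥0-linear combinations of simple roots. -/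
/-!
Every root is `±` an `ℕ`-combination of simple roots (a positive root that is not simple splits
into two positive roots, and this terminates because no nonempty sum of positive roots vanishes).
Hence `λ₁ - λ₂ = x - y` with `x, y` such combinations, and `μ = λ₁ - x = λ₂ - y` is a common
lower bound. If `⟪μ, α⟫ < 0` for a simple root `α`, then `⟪x, α⟫ > 0` and `⟪y, α⟫ > 0`; since
distinct simple roots have non-positive inner products, `α` occurs in both `x` and `y`, so
`μ + α` is again a common lower bound. Repeating this must stop, at a dominant `μ`.
-/

open scoped RealInnerProductSpace

theorem AddSubgroup.exists_sub_eq_of_mem_closure {G : Type*} [AddCommGroup G] {S : Set G}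
    {M : AddSubmonoid G} (hS : ∀ x ∈ S, x ∈ M ∨ -x ∈ M) {v : G}
    (hv : v ∈ AddSubgroup.closure S) : ∃ x ∈ M, ∃ y ∈ M, x - y = v := by
  induction hv using AddSubgroup.closure_induction with
  | mem x hx =>
    rcases hS x hx with hx | hx
    · exact ⟨x, hx, 0, M.zero_mem, sub_zero x⟩
    · exact ⟨0, M.zero_mem, -x, hx, by rw [zero_sub, neg_neg]⟩
  | zero => exact ⟨0, M.zero_mem, 0, M.zero_mem, sub_zero 0⟩
  | add _ _ _ _ hv hw =>
    obtain ⟨x, hx, y, hy, rfl⟩ := hv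
    obtain ⟨x', hx', y', hy', rfl⟩ := hw
    exact ⟨x + x', M.add_mem hx hx', y + y', M.add_mem hy hy', by abel⟩
  | neg _ _ hv =>
    obtain ⟨x, hx, y, hy, rfl⟩ := hv
    exact ⟨y, hy, x, hx, (neg_sub x y).symm⟩

section Positive

variable {V : Type*} [AddGroup V]

structure IsPositiveSystem (Φ Φp : Finset V) : Prop where
  subset : Φp ⊆ Φ
  mem_or_neg_mem : ∀ α ∈ Φ, (α ∈ Φp ∧ -α ∉ Φp) ∨ (α ∉ Φp ∧ -α ∈ Φp)
  add_mem : ∀ α ∈ Φp, ∀ β ∈ Φp, α + β ∈ Φ → α + β ∈ Φp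

def simpleRoots (Φp : Finset V) : Set V :=
  {α | α ∈ Φp ∧ ¬ ∃ β ∈ Φp, ∃ γ ∈ Φp, α = β + γ}

theorem IsPositiveSystem.neg_notMem {Φ Φp : Finset V} (hp : IsPositiveSystem Φ Φp) {α : V}
    (hα : α ∈ Φp) : -α ∉ Φp := by
  rcases hp.mem_or_neg_mem α (hp.subset hα) with h | h
  · exact h.2
  · exact absurd hα h.1

end Positive

section InnerProduct

variable {V : Type*} [NormedAddCommGroup V] [InnerProductSpace ℝ V]

theorem inner_multiset_sum_nonneg {s : Multiset V} {v : V} (h : ∀ x ∈ s, 0 ≤ ⟪v, x⟫) :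
    0 ≤ ⟪v, s.sum⟫ := by
  change 0 ≤ innerₗ V v s.sum
  rw [map_multiset_sum]
  exact Multiset.sum_nonneg fun r hr => by
    obtain ⟨x, hx, rfl⟩ := Multiset.mem_map.1 hr
    exact h x hx

theorem mem_of_inner_multiset_sum_pos {Δ : Set V} (hΔ : Δ.Pairwise fun α β => ⟪α, β⟫ ≤ 0)
    {s : Multiset V} (hs : ∀ x ∈ s, x ∈ Δ) {α : V} (hα : α ∈ Δ) (h : 0 < ⟪s.sum, α⟫) :
    α ∈ s := by
  by_contra hαs
  have : 0 ≤ ⟪-α, s.sum⟫ := inner_multiset_sum_nonneg fun x hx => by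
    rw [inner_neg_left, neg_nonneg]
    exact hΔ hα (hs x hx) (ne_of_mem_of_not_mem hx hαs).symm
  rw [inner_neg_left, real_inner_comm] at this
  linarith

theorem exists_le_le_sub_multiset_sum_eq_and_inner_nonneg {Δ : Set V}
    (hΔ : Δ.Pairwise fun α β => ⟪α, β⟫ ≤ 0) {lam₁ lam₂ : V} (h₁ : ∀ α ∈ Δ, 0 ≤ ⟪lam₁, α⟫)
    (h₂ : ∀ α ∈ Δ, 0 ≤ ⟪lam₂, α⟫) (s t : Multiset V) (hs : ∀ x ∈ s, x ∈ Δ)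
    (ht : ∀ x ∈ t, x ∈ Δ) (h : lam₁ - s.sum = lam₂ - t.sum) :
    ∃ s' ≤ s, ∃ t' ≤ t, lam₁ - s'.sum = lam₂ - t'.sum ∧ ∀ α ∈ Δ, 0 ≤ ⟪lam₁ - s'.sum, α⟫ := by
  classical
  induction s using Multiset.strongInductionOn generalizing t with
  | ih s ih =>
  by_cases hdom : ∀ α ∈ Δ, 0 ≤ ⟪lam₁ - s.sum, α⟫
  · exact ⟨s, le_rfl, t, le_rfl, h, hdom⟩
  push Not at hdom
  obtain ⟨α, hα, hneg⟩ := hdom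
  have hαs : α ∈ s := mem_of_inner_multiset_sum_pos hΔ hs hα <| by
    rw [inner_sub_left] at hneg
    linarith [h₁ α hα]
  have hαt : α ∈ t := mem_of_inner_multiset_sum_pos hΔ ht hα <| by
    rw [h, inner_sub_left] at hneg
    linarith [h₂ α hα]
  have herase : lam₁ - (s.erase α).sum = lam₂ - (t.erase α).sum := by
    rw [← Multiset.sum_erase hαs, ← Multiset.sum_erase hαt] at h
    linear_combination (norm := abel) h
  obtain ⟨s', hs', t', ht', heq, hdom⟩ := ih (s.erase α) (Multiset.erase_lt.2 hαs) (t.erase α)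
    (fun x hx => hs x (Multiset.mem_of_mem_erase hx))
    (fun x hx => ht x (Multiset.mem_of_mem_erase hx)) herase
  exact ⟨s', hs'.trans (Multiset.erase_le α s), t', ht'.trans (Multiset.erase_le α t), heq, hdom⟩

end InnerProduct

section RootSystem

variable {V : Type*} [NormedAddCommGroup V] [InnerProductSpace ℝ V]

noncomputable def cartan (β α : V) : ℝ :=
  2 * ⟪β, α⟫ / ⟪α, α⟫

theorem cartan_self {α : V} (hα : α ≠ 0) : cartan α α = 2 := by
  rw [cartan, mul_div_assoc, div_self (inner_self_ne_zero.2 hα), mul_one]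

theorem cartan_add_left (x y α : V) : cartan (x + y) α = cartan x α + cartan y α := by
  simp only [cartan, inner_add_left]
  ring

theorem cartan_neg_left (x α : V) : cartan (-x) α = -cartan x α := by
  simp only [cartan, inner_neg_left]
  ring

def weightLattice (Φ : Finset V) : AddSubgroup V where
  carrier := {lam | ∀ α ∈ Φ, ∃ z : ℤ, cartan lam α = z}
  zero_mem' α _ := ⟨0, by simp [cartan]⟩
  add_mem' {x y} hx hy α hα := by
    obtain ⟨m, hm⟩ := hx α hα
    obtain ⟨n, hn⟩ := hy α hα
    exact ⟨m + n, by rw [cartan_add_left, hm, hn, Int.cast_add]⟩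
  neg_mem' {x} hx α hα := by
    obtain ⟨m, hm⟩ := hx α hα
    exact ⟨-m, by rw [cartan_neg_left, hm, Int.cast_neg]⟩

theorem cartan_nonneg_iff {α : V} (hα : α ≠ 0) (β : V) : 0 ≤ cartan β α ↔ 0 ≤ ⟪β, α⟫ := by
  rw [cartan, le_div_iff₀ (real_inner_self_pos.2 hα), zero_mul]
  constructor <;> intro h <;> linarith

theorem cartan_neg_iff {α : V} (hα : α ≠ 0) (β : V) : cartan β α < 0 ↔ ⟪β, α⟫ < 0 := by
  simpa only [not_le] using (cartan_nonneg_iff hα β).not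

theorem inner_mul_inner_lt_of_forall_ne_smul {α β : V} (hα : α ≠ 0) (hβ : β ≠ 0)
    (h : ∀ t : ℝ, β ≠ t • α) : ⟪α, β⟫ * ⟪α, β⟫ < ⟪α, α⟫ * ⟪β, β⟫ := by
  refine (real_inner_mul_inner_self_le α β).lt_of_ne fun heq => ?_
  have habs : ‖⟪α, β⟫‖ = ‖α‖ * ‖β‖ := by
    rw [Real.norm_eq_abs]
    refine (pow_left_inj₀ (abs_nonneg _) (by positivity) two_ne_zero).1 ?_
    rw [sq_abs, mul_pow, ← real_inner_self_eq_norm_sq, ← real_inner_self_eq_norm_sq, sq, heq]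
  obtain ⟨t, -, ht⟩ := (norm_inner_eq_norm_iff hα hβ).1 habs
  exact h t ht

theorem cartan_mul_cartan_lt_four {α β : V} (hα : α ≠ 0) (hβ : β ≠ 0)
    (h : ∀ t : ℝ, β ≠ t • α) : cartan α β * cartan β α < 4 := by
  have hαα := real_inner_self_pos.2 hα
  have hββ := real_inner_self_pos.2 hβ
  rw [cartan, cartan, real_inner_comm α β, div_mul_div_comm, div_lt_iff₀ (by positivity)]
  nlinarith [inner_mul_inner_lt_of_forall_ne_smul hα hβ h]

structure IsReducedRootSystem (Φ : Finset V) : Prop where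
  zero_notMem : (0 : V) ∉ Φ
  eq_one_or_neg_one_of_smul_mem : ∀ α ∈ Φ, ∀ t : ℝ, t • α ∈ Φ → t = 1 ∨ t = -1
  exists_int_cartan : ∀ α ∈ Φ, ∀ β ∈ Φ, ∃ z : ℤ, cartan β α = z
  sub_cartan_smul_mem : ∀ α ∈ Φ, ∀ β ∈ Φ, β - cartan β α • α ∈ Φ

namespace IsReducedRootSystem

variable {Φ : Finset V} {α β : V}

theorem ne_zero (hΦ : IsReducedRootSystem Φ) (hα : α ∈ Φ) : α ≠ 0 :=
  ne_of_mem_of_not_mem hα hΦ.zero_notMem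

theorem add_mem_of_cartan_eq_neg_one (hΦ : IsReducedRootSystem Φ) (hα : α ∈ Φ) (hβ : β ∈ Φ)
    (h : cartan β α = -1) : α + β ∈ Φ := by
  simpa [h, add_comm] using hΦ.sub_cartan_smul_mem α hα β hβ

theorem add_mem_of_inner_neg (hΦ : IsReducedRootSystem Φ) (hα : α ∈ Φ) (hβ : β ∈ Φ)
    (hneg : ⟪α, β⟫ < 0) (hne : α + β ≠ 0) : α + β ∈ Φ := by
  by_cases hpar : ∃ t : ℝ, β = t • α
  · obtain ⟨t, rfl⟩ := hpar
    rcases hΦ.eq_one_or_neg_one_of_smul_mem α hα t hβ with rfl | rfl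
    · rw [one_smul] at hneg
      exact absurd hneg (real_inner_self_nonneg).not_gt
    · exact absurd (by rw [neg_one_smul, add_neg_cancel]) hne
  push Not at hpar
  obtain ⟨m, hm⟩ := hΦ.exists_int_cartan β hβ α hα
  obtain ⟨n, hn⟩ := hΦ.exists_int_cartan α hα β hβ
  have hm0 : m < 0 := by
    have := (cartan_neg_iff (hΦ.ne_zero hβ) α).2 hneg
    rw [hm] at this
    exact_mod_cast this
  have hn0 : n < 0 := by
    have := (cartan_neg_iff (hΦ.ne_zero hα) β).2 (by rwa [real_inner_comm])
    rw [hn] at this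
    exact_mod_cast this
  have hmn : m * n < 4 := by
    have := cartan_mul_cartan_lt_four (hΦ.ne_zero hα) (hΦ.ne_zero hβ) hpar
    rw [hm, hn] at this
    exact_mod_cast this
  obtain hm1 | hn1 : m = -1 ∨ n = -1 := by
    by_contra! h
    nlinarith [show m ≤ -2 by omega, show n ≤ -2 by omega]
  · rw [add_comm]
    exact hΦ.add_mem_of_cartan_eq_neg_one hβ hα (by rw [hm, hm1]; norm_num)
  · exact hΦ.add_mem_of_cartan_eq_neg_one hα hβ (by rw [hn, hn1]; norm_num)

theorem neg_mem (hΦ : IsReducedRootSystem Φ) (hα : α ∈ Φ) : -α ∈ Φ := by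
  simpa [cartan_self (hΦ.ne_zero hα), two_smul] using hΦ.sub_cartan_smul_mem α hα α hα

theorem closure_le_weightLattice (hΦ : IsReducedRootSystem Φ) :
    AddSubgroup.closure (Φ : Set V) ≤ weightLattice Φ :=
  (AddSubgroup.closure_le _).2 fun β hβ α hα => hΦ.exists_int_cartan α hα β hβ

end IsReducedRootSystem

namespace IsPositiveSystem

variable {Φ Φp : Finset V}

theorem eq_zero_of_multiset_sum_eq_zero (hΦ : IsReducedRootSystem Φ)
    (hp : IsPositiveSystem Φ Φp) {s : Multiset V} (hs : ∀ x ∈ s, x ∈ Φp) (h : s.sum = 0) :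
    s = 0 := by
  classical
  induction hn : Multiset.card s using Nat.strong_induction_on generalizing s with
  | _ n ih =>
  by_contra hs0
  obtain ⟨β, hβs⟩ := Multiset.exists_mem_of_ne_zero hs0
  have hβ := hs β hβs
  have hβT : β + (s.erase β).sum = 0 := (Multiset.sum_erase hβs).trans h
  obtain ⟨γ, hγT, hβγ⟩ : ∃ γ ∈ s.erase β, ⟪β, γ⟫ < 0 := by
    by_contra! hall
    have := inner_multiset_sum_nonneg hall
    rw [eq_neg_of_add_eq_zero_right hβT, inner_neg_right] at this
    linarith [real_inner_self_pos.2 (hΦ.ne_zero (hp.subset hβ))]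
  have hγ := hs γ (Multiset.mem_of_mem_erase hγT)
  have hβγ0 : β + γ ≠ 0 := fun h0 => hp.neg_notMem hβ (eq_neg_of_add_eq_zero_right h0 ▸ hγ)
  have hβγ := hp.add_mem β hβ γ hγ
    (hΦ.add_mem_of_inner_neg (hp.subset hβ) (hp.subset hγ) hβγ hβγ0)
  -- merging `β` and `γ` into the root `β + γ` gives a shorter vanishing sum
  refine Multiset.cons_ne_zero (ih _ ?_ (s := (β + γ) ::ₘ (s.erase β).erase γ) ?_ ?_ rfl)
  · rw [Multiset.card_cons, Multiset.card_erase_add_one hγT, ← hn]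
    exact Multiset.card_erase_lt_of_mem hβs
  · intro x hx
    rcases Multiset.mem_cons.1 hx with rfl | hx
    · exact hβγ
    · exact hs x (Multiset.mem_of_mem_erase (Multiset.mem_of_mem_erase hx))
  · rw [Multiset.sum_cons, add_assoc, Multiset.sum_erase hγT, hβT]

theorem eq_zero_of_mem_closure_of_neg_mem_closure (hΦ : IsReducedRootSystem Φ)
    (hp : IsPositiveSystem Φ Φp) {x : V} (hx : x ∈ AddSubmonoid.closure (Φp : Set V))
    (hnx : -x ∈ AddSubmonoid.closure (Φp : Set V)) : x = 0 := by
  obtain ⟨s, hs, rfl⟩ := AddSubmonoid.exists_multiset_of_mem_closure hx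
  obtain ⟨t, ht, hts⟩ := AddSubmonoid.exists_multiset_of_mem_closure hnx
  have hst : s + t = 0 := hp.eq_zero_of_multiset_sum_eq_zero hΦ
    (fun x hx => (Multiset.mem_add.1 hx).elim (hs x) (ht x))
    (by rw [Multiset.sum_add, hts, add_neg_cancel])
  rw [(add_eq_zero.1 hst).1, Multiset.sum_zero]

theorem mem_closure_simpleRoots (hΦ : IsReducedRootSystem Φ) (hp : IsPositiveSystem Φ Φp)
    {α : V} (hα : α ∈ Φp) : α ∈ AddSubmonoid.closure (simpleRoots Φp) := by
  let M := AddSubmonoid.closure (Φp : Set V)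
  -- the strict order of the pointed cone `M`, well-founded on the finite set `Φp`
  let r : Φp → Φp → Prop := fun β γ => (γ : V) - β ∈ M ∧ β ≠ γ
  have : IsTrans Φp r := ⟨fun a b c hab hbc => by
    refine ⟨by simpa using M.add_mem hbc.1 hab.1, fun hac => hab.2 (Subtype.ext ?_)⟩
    subst hac
    exact (sub_eq_zero.1 (hp.eq_zero_of_mem_closure_of_neg_mem_closure hΦ hab.1
      (by simpa using hbc.1))).symm⟩
  have : Std.Irrefl r := ⟨fun a h => h.2 rfl⟩
  suffices ∀ a : Φp, (a : V) ∈ AddSubmonoid.closure (simpleRoots Φp) from this ⟨α, hα⟩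
  intro a
  induction a using (Finite.wellFounded_of_trans_of_irrefl r).induction with
  | _ a ih =>
  by_cases hsimple : (a : V) ∈ simpleRoots Φp
  · exact AddSubmonoid.subset_closure hsimple
  obtain ⟨β, hβ, γ, hγ, hsum⟩ : ∃ β ∈ Φp, ∃ γ ∈ Φp, (a : V) = β + γ := by
    simpa [simpleRoots, a.2] using hsimple
  have below (b : Φp) (c : V) (hc : c ∈ Φp) (hbc : (a : V) = b + c) : r b a :=
    ⟨by simpa [hbc] using AddSubmonoid.subset_closure hc,
      fun h => hΦ.ne_zero (hp.subset hc) (by simpa [← h] using hbc.symm)⟩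
  have hrβ := below ⟨β, hβ⟩ γ hγ hsum
  have hrγ := below ⟨γ, hγ⟩ β hβ (hsum.trans (add_comm β γ))
  rw [hsum]
  exact AddSubmonoid.add_mem _ (ih _ hrβ) (ih _ hrγ)

theorem exists_sub_eq_of_mem_closure (hΦ : IsReducedRootSystem Φ)
    (hp : IsPositiveSystem Φ Φp) {v : V} (hv : v ∈ AddSubgroup.closure (Φ : Set V)) :
    ∃ x ∈ AddSubmonoid.closure (simpleRoots Φp), ∃ y ∈ AddSubmonoid.closure (simpleRoots Φp),
      x - y = v :=
  AddSubgroup.exists_sub_eq_of_mem_closure (fun α hα => (hp.mem_or_neg_mem α hα).imp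
    (fun h => hp.mem_closure_simpleRoots hΦ h.1) (fun h => hp.mem_closure_simpleRoots hΦ h.2)) hv

theorem pairwise_inner_nonpos_simpleRoots (hΦ : IsReducedRootSystem Φ)
    (hp : IsPositiveSystem Φ Φp) : (simpleRoots Φp).Pairwise fun α β => ⟪α, β⟫ ≤ 0 := by
  intro α hα β hβ hne
  by_contra! hpos
  have hαβ : α + -β ∈ Φ := hΦ.add_mem_of_inner_neg (hp.subset hα.1)
    (hΦ.neg_mem (hp.subset hβ.1)) (by rw [inner_neg_right]; linarith)
    (by rwa [← sub_eq_add_neg, sub_ne_zero])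
  rcases hp.mem_or_neg_mem _ hαβ with ⟨hpos, -⟩ | ⟨-, hneg⟩
  · exact hα.2 ⟨α + -β, hpos, β, hβ.1, by abel⟩
  · exact hβ.2 ⟨-(α + -β), hneg, α, hα.1, by abel⟩

end IsPositiveSystem

end RootSystem

theorem exists_sum_natCast_smul_eq_multiset_sum {V : Type*} [AddCommGroup V] [Module ℝ V]
    {Δ : Finset V} {s : Multiset V} (hs : ∀ x ∈ s, x ∈ Δ) :
    ∃ c : V → ℕ, s.sum = ∑ α ∈ Δ, (c α : ℝ) • α := by
  classical
  refine ⟨fun α => s.count α, ?_⟩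
  simp only [Nat.cast_smul_eq_nsmul]
  exact Finset.sum_multiset_count_of_subset s Δ fun x hx => hs x (Multiset.mem_toFinset.1 hx)

theorem dominant_weights_common_lower_bound_general {V : Type*} [NormedAddCommGroup V]
    [InnerProductSpace ℝ V] (Φ Φp Δ : Finset V)
    (h0 : (0 : V) ∉ Φ)
    (hred : ∀ α ∈ Φ, ∀ t : ℝ, t • α ∈ Φ → t = 1 ∨ t = -1)
    (hcart : ∀ α ∈ Φ, ∀ β ∈ Φ, ∃ z : ℤ, 2 * ⟪β, α⟫ / ⟪α, α⟫ = (z : ℝ))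
    (hrefl : ∀ α ∈ Φ, ∀ β ∈ Φ, β - (2 * ⟪β, α⟫ / ⟪α, α⟫) • α ∈ Φ)
    (hpsub : Φp ⊆ Φ)
    (hposneg : ∀ α ∈ Φ, (α ∈ Φp ∧ -α ∉ Φp) ∨ (α ∉ Φp ∧ -α ∈ Φp))
    (hadd : ∀ α ∈ Φp, ∀ β ∈ Φp, α + β ∈ Φ → α + β ∈ Φp)
    (hΔ : ∀ α : V, α ∈ Δ ↔ α ∈ Φp ∧ ¬ ∃ β ∈ Φp, ∃ γ ∈ Φp, α = β + γ)
    (lam₁ lam₂ : V)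
    (hlam₁ : ∀ α ∈ Φ, ∃ z : ℤ, 2 * ⟪lam₁, α⟫ / ⟪α, α⟫ = (z : ℝ))
    (hdom₁ : ∀ α ∈ Φp, 0 ≤ 2 * ⟪lam₁, α⟫ / ⟪α, α⟫)
    (hdom₂ : ∀ α ∈ Φp, 0 ≤ 2 * ⟪lam₂, α⟫ / ⟪α, α⟫)
    (hdiff : lam₁ - lam₂ ∈ AddSubgroup.closure (Φ : Set V)) :
    ∃ μ : V,
      (∀ α ∈ Φ, ∃ z : ℤ, 2 * ⟪μ, α⟫ / ⟪α, α⟫ = (z : ℝ)) ∧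
      (∀ α ∈ Φp, 0 ≤ 2 * ⟪μ, α⟫ / ⟪α, α⟫) ∧
      (∃ c : V → ℕ, lam₁ - μ = ∑ α ∈ Δ, (c α : ℝ) • α) ∧
      (∃ c : V → ℕ, lam₂ - μ = ∑ α ∈ Δ, (c α : ℝ) • α) := by
  have hΦ : IsReducedRootSystem Φ := ⟨h0, hred, hcart, hrefl⟩
  have hp : IsPositiveSystem Φ Φp := ⟨hpsub, hposneg, hadd⟩
  have hnonneg (lam : V) (hdom : ∀ α ∈ Φp, 0 ≤ cartan lam α) (α : V)
      (hα : α ∈ simpleRoots Φp) : 0 ≤ ⟪lam, α⟫ :=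
    (cartan_nonneg_iff (hΦ.ne_zero (hpsub hα.1)) lam).1 (hdom α hα.1)
  obtain ⟨x, hx, y, hy, hxy⟩ := hp.exists_sub_eq_of_mem_closure hΦ hdiff
  obtain ⟨s, hs, rfl⟩ := AddSubmonoid.exists_multiset_of_mem_closure hx
  obtain ⟨t, ht, rfl⟩ := AddSubmonoid.exists_multiset_of_mem_closure hy
  obtain ⟨s', hs', t', ht', heq, hdom⟩ := exists_le_le_sub_multiset_sum_eq_and_inner_nonneg
    (hp.pairwise_inner_nonpos_simpleRoots hΦ) (hnonneg lam₁ hdom₁) (hnonneg lam₂ hdom₂)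
    s t hs ht (by rw [sub_eq_sub_iff_sub_eq_sub, hxy])
  have hs'Δ : ∀ x ∈ s', x ∈ Δ := fun x hx => (hΔ x).2 (hs x (Multiset.mem_of_le hs' hx))
  have ht'Δ : ∀ x ∈ t', x ∈ Δ := fun x hx => (hΔ x).2 (ht x (Multiset.mem_of_le ht' hx))
  refine ⟨lam₁ - s'.sum, ?_, fun α hα => ?_, ?_, ?_⟩
  · refine (weightLattice Φ).sub_mem hlam₁ (hΦ.closure_le_weightLattice ?_)
    exact AddSubgroup.multiset_sum_mem _ _ fun x hx =>
      AddSubgroup.subset_closure (hpsub ((hΔ x).1 (hs'Δ x hx)).1)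
  · obtain ⟨r, hr, rfl⟩ :=
      AddSubmonoid.exists_multiset_of_mem_closure (hp.mem_closure_simpleRoots hΦ hα)
    exact (cartan_nonneg_iff (hΦ.ne_zero (hpsub hα)) _).2
      (inner_multiset_sum_nonneg fun x hx => hdom x (hr x hx))
  · rw [sub_sub_cancel]
    exact exists_sum_natCast_smul_eq_multiset_sum hs'Δ
  · rw [heq, sub_sub_cancel]
    exact exists_sum_natCast_smul_eq_multiset_sum ht'Δ

/-- For a reduced crystallographic root system `Φ` with positive system `Φp` and simple roots
`Δ` in a real inner product space: if `λ₁, λ₂` are dominant weights with `λ₁ − λ₂` in the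
root lattice `Q = ℤ-span of Φ`, then there is a dominant weight `μ` with `μ ≤ λ₁` and
`μ ≤ λ₂` for the dominance order, i.e. both `λ₁ − μ` and `λ₂ − μ` are `ℤ≥0`-combinations of
simple roots. -/
theorem dominant_weights_common_lower_bound {V : Type*} [NormedAddCommGroup V]
    [InnerProductSpace ℝ V] [FiniteDimensional ℝ V] (Φ Φp Δ : Finset V)
    (hspan : Submodule.span ℝ (Φ : Set V) = ⊤)
    (h0 : (0 : V) ∉ Φ)
    (hred : ∀ α ∈ Φ, ∀ t : ℝ, t • α ∈ Φ → t = 1 ∨ t = -1)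
    (hcart : ∀ α ∈ Φ, ∀ β ∈ Φ, ∃ z : ℤ, 2 * ⟪β, α⟫ / ⟪α, α⟫ = (z : ℝ))
    (hrefl : ∀ α ∈ Φ, ∀ β ∈ Φ, β - (2 * ⟪β, α⟫ / ⟪α, α⟫) • α ∈ Φ)
    (hpsub : Φp ⊆ Φ)
    (hposneg : ∀ α ∈ Φ, (α ∈ Φp ∧ -α ∉ Φp) ∨ (α ∉ Φp ∧ -α ∈ Φp))
    (hadd : ∀ α ∈ Φp, ∀ β ∈ Φp, α + β ∈ Φ → α + β ∈ Φp)
    (hΔ : ∀ α : V, α ∈ Δ ↔ α ∈ Φp ∧ ¬ ∃ β ∈ Φp, ∃ γ ∈ Φp, α = β + γ)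
    (lam₁ lam₂ : V)
    (hlam₁ : ∀ α ∈ Φ, ∃ z : ℤ, 2 * ⟪lam₁, α⟫ / ⟪α, α⟫ = (z : ℝ))
    (hlam₂ : ∀ α ∈ Φ, ∃ z : ℤ, 2 * ⟪lam₂, α⟫ / ⟪α, α⟫ = (z : ℝ))
    (hdom₁ : ∀ α ∈ Φp, 0 ≤ 2 * ⟪lam₁, α⟫ / ⟪α, α⟫)
    (hdom₂ : ∀ α ∈ Φp, 0 ≤ 2 * ⟪lam₂, α⟫ / ⟪α, α⟫)
    (hdiff : lam₁ - lam₂ ∈ AddSubgroup.closure (Φ : Set V)) :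
    ∃ μ : V,
      (∀ α ∈ Φ, ∃ z : ℤ, 2 * ⟪μ, α⟫ / ⟪α, α⟫ = (z : ℝ)) ∧
      (∀ α ∈ Φp, 0 ≤ 2 * ⟪μ, α⟫ / ⟪α, α⟫) ∧
      (∃ c : V → ℕ, lam₁ - μ = ∑ α ∈ Δ, (c α : ℝ) • α) ∧
      (∃ c : V → ℕ, lam₂ - μ = ∑ α ∈ Δ, (c α : ℝ) • α) :=
  dominant_weights_common_lower_bound_general Φ Φp Δ h0 hred hcart hrefl hpsub hposneg hadd hΔ lam₁
    lam₂ hlam₁ hdom₁ hdom₂ hdiff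
end
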